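/- Full conditionals determine a positive joint distribution: if p and q are positive distributions on X = Π_{j∈ι} α j such that p(xᵢ|x₋ᵢ) = q(xᵢ|x₋ᵢ) for every i ∈ ι and every x ∈ X, then p = q. -/

import Mathlib

/-!
Since `p` and `q` are positive, the equation `p(xᵢ|x₋ᵢ) = q(xᵢ|x₋ᵢ)` says
`p(x)/q(x) = p₋ᵢ(x)/q₋ᵢ(x)`, and the right-hand side does not depend on `xᵢ`. So the ratio `p/q`
does not change when one coordinate changes, and changing the coordinates one at a time shows that it is
constant on `X`. Because `p` and `q` both sum to `1`, the constant is `1`.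
-/

open Finset

variable {ι : Type} [Fintype ι] [DecidableEq ι] [Nonempty ι]
  {α : ι → Type} [∀ i, Fintype (α i)] [∀ i, DecidableEq (α i)] [∀ i, Nonempty (α i)]

/-- `p` is a probability distribution on the joint space `X = Π j, α j`. -/
def IsDist (p : (∀ j, α j) → ℝ) : Prop :=
  (∀ x, 0 ≤ p x) ∧ ∑ x, p x = 1

/-- The `i`-marginal `p₋ᵢ(x) = Σ_{a ∈ α i} p(x[i↦a])`. -/
noncomputable def marg (p : (∀ j, α j) → ℝ) (i : ι) (x : ∀ j, α j) : ℝ :=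
  ∑ a, p (Function.update x i a)

/-- The full conditional `p(xᵢ|x₋ᵢ) = p(x)/p₋ᵢ(x)`. -/
noncomputable def fullCond (p : (∀ j, α j) → ℝ) (i : ι) (x : ∀ j, α j) : ℝ :=
  p x / marg p i x

/-- `θ` is a conditional probability table (CPT) at node `i`. -/
def IsCPT (i : ι) (θ : α i → (∀ j, α j) → ℝ) : Prop :=
  (∀ a x, 0 < θ a x) ∧ (∀ x, ∑ a, θ a x = 1) ∧
  (∀ a x (b : α i), θ a (Function.update x i b) = θ a x)

/-- `q` belongs to the full-conditional manifold `E(θ)`. -/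
def memE (i : ι) (θ : α i → (∀ j, α j) → ℝ) (q : (∀ j, α j) → ℝ) : Prop :=
  ∀ x, q x = marg q i x * θ (x i) x

/-- Kullback–Leibler divergence. -/
noncomputable def KL (p q : (∀ j, α j) → ℝ) : ℝ :=
  ∑ x, p x * Real.log (p x / q x)

theorem apply_eq_apply_of_forall_update {κ : Type*} [Fintype κ] [DecidableEq κ] {β : κ → Type*}
    {γ : Type*} (f : (∀ k, β k) → γ) (hf : ∀ x k b, f (Function.update x k b) = f x)
    (x y : ∀ k, β k) : f x = f y := by
  have hpiecewise : ∀ s : Finset κ, f (s.piecewise x y) = f y := by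
    intro s
    induction s using Finset.induction with
    | empty => rw [piecewise_empty]
    | insert k s _ ih => rw [piecewise_insert, hf, ih]
  simpa using hpiecewise univ

theorem eq_of_forall_eq_mul_of_sum_eq {β : Type*} [Fintype β] {p q : β → ℝ} {c : ℝ}
    (hsum : ∑ x, p x = ∑ x, q x) (hq : ∑ x, q x ≠ 0) (hpq : ∀ x, p x = c * q x) : p = q := by
  have hc : c = 1 := by
    rw [Finset.sum_congr rfl fun x _ => hpq x, ← mul_sum] at hsum
    exact (mul_eq_right₀ hq).mp hsum
  funext x
  rw [hpq x, hc, one_mul]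

omit [Fintype ι] [Nonempty ι] [∀ i, DecidableEq (α i)] [∀ i, Nonempty (α i)] in
theorem marg_update_self (r : (∀ j, α j) → ℝ) (i : ι) (x : ∀ j, α j) (b : α i) :
    marg r i (Function.update x i b) = marg r i x := by
  simp only [marg, Function.update_idem]

omit [Fintype ι] [Nonempty ι] [∀ i, DecidableEq (α i)] in
theorem marg_pos {r : (∀ j, α j) → ℝ} (hr : ∀ x, 0 < r x) (i : ι) (x : ∀ j, α j) :
    0 < marg r i x :=
  sum_pos (fun _ _ => hr _) univ_nonempty

omit [Fintype ι] [Nonempty ι] [∀ i, DecidableEq (α i)] in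
theorem div_eq_marg_div_marg_of_fullCond_eq {p q : (∀ j, α j) → ℝ} (hp : ∀ x, 0 < p x)
    (hq : ∀ x, 0 < q x) {i : ι} {x : ∀ j, α j} (h : fullCond p i x = fullCond q i x) :
    p x / q x = marg p i x / marg q i x := by
  rw [fullCond, fullCond, div_eq_div_iff (marg_pos hp i x).ne' (marg_pos hq i x).ne'] at h
  rw [div_eq_div_iff (hq x).ne' (marg_pos hq i x).ne', h, mul_comm]

omit [Fintype ι] [Nonempty ι] [∀ i, DecidableEq (α i)] in
theorem div_update_eq_of_fullCond_eq {p q : (∀ j, α j) → ℝ} (hp : ∀ x, 0 < p x)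
    (hq : ∀ x, 0 < q x) {i : ι} (h : ∀ x, fullCond p i x = fullCond q i x)
    (x : ∀ j, α j) (b : α i) :
    p (Function.update x i b) / q (Function.update x i b) = p x / q x := by
  rw [div_eq_marg_div_marg_of_fullCond_eq hp hq (h _), div_eq_marg_div_marg_of_fullCond_eq hp hq (h x),
    marg_update_self, marg_update_self]

/-- full conditionals determine a positive joint distribution:
if all full conditionals of two positive distributions agree, the distributions
are equal. -/
theorem fullConditionals_determine_distribution
    (p q : (∀ j, α j) → ℝ) (hp : IsDist p) (hppos : ∀ x, 0 < p x)
    (hq : IsDist q) (hqpos : ∀ x, 0 < q x)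
    (h : ∀ (i : ι) (x : ∀ j, α j), fullCond p i x = fullCond q i x) :
    p = q := by
  have hratio_const : ∀ x y, p x / q x = p y / q y :=
    apply_eq_apply_of_forall_update (fun x => p x / q x)
      fun x i b => div_update_eq_of_fullCond_eq hppos hqpos (h i) x b
  obtain ⟨y⟩ : Nonempty (∀ j, α j) := inferInstance
  refine eq_of_forall_eq_mul_of_sum_eq (c := p y / q y) (hp.2.trans hq.2.symm)
    (hq.2 ▸ one_ne_zero) fun x => ?_
  rw [← hratio_const x y, div_mul_cancel₀ _ (hqpos x).ne']
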